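/- Let f be a non-negative multiplicative arithmetic function such that (1) there is a constant A₁ > 0 with f(p^r) ≤ A₁^r for all primes p and all integers r ≥ 1, and (2) for every ε > 0 there is a constant A₂(ε) > 0 with f(n) ≤ A₂(ε) n^ε for all n ≥ 1. Then ∑_{n ≤ x} f(n) ≪ (x/log x) · exp(∑_{p ≤ x} f(p)/p) for x ≥ 2, where the inner sum is over primes p ≤ x, and the implied constant depends only on A₁ and the function A₂. -/

import Mathlib

/-!
Put `S = ∑_{n ≤ x} f n`. Since `log x = log n + log (x / n)` and `log (x / n) ≤ x / n`,
`S log x ≤ ∑_{n ≤ x} f n log n + x ∑_{n ≤ x} f n / n`. Writing `log n = ∑_{p^k ∥ n} log p^k` and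
`n = m p^k` with `p ∤ m`, multiplicativity and positivity give
`∑_{n ≤ x} f n log n ≤ ∑_{m ≤ x} f m ∑_{p^k ≤ x/m} f (p^k) log p^k`, and the inner sum is
`O(x / m)`: the primes contribute at most `A₁ θ(x / m) ≤ A₁ log 4 · x / m` by Chebyshev, and
for `k ≥ 2` Rankin's trick `f (p^k) log p^k ≪ (p^k)^{2ε} ≤ (x / m) p^{-(1 - 2ε) k}` leaves a
convergent sum over `p` and `k ≥ 2` when `ε < 1/4`. Hence `S log x ≪ x ∑_{n ≤ x} f n / n`, and
by the Euler product, as `f (p^a) / p^a ≪ p^{-(1 - ε) a}`,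
`∑_{n ≤ x} f n / n ≤ ∏_{p ≤ x} (1 + f p / p + ∑_{a ≥ 2} f (p^a) / p^a)`
`≤ exp (∑_{p ≤ x} f p / p + O(1))`.
-/

open Finset Real

lemma Finset.sum_le_sum_of_injOn {ι κ M : Type*} [AddCommMonoid M] [PartialOrder M]
    [IsOrderedAddMonoid M] {s : Finset ι} {t : Finset κ} {f : ι → M} {g : κ → M} (e : ι → κ)
    (he : Set.InjOn e s) (hest : Set.MapsTo e s t) (hg : ∀ j ∈ t, 0 ≤ g j)
    (h : ∀ i ∈ s, f i ≤ g (e i)) :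
    ∑ i ∈ s, f i ≤ ∑ j ∈ t, g j := by
  classical
  calc ∑ i ∈ s, f i ≤ ∑ i ∈ s, g (e i) := sum_le_sum h
    _ = ∑ j ∈ s.image e, g j := (sum_image he).symm
    _ ≤ ∑ j ∈ t, g j :=
      sum_le_sum_of_subset_of_nonneg (image_subset_iff.2 hest) fun j hj _ => hg j hj

lemma natCast_pow_rpow (p k : ℕ) (s : ℝ) : ((p ^ k : ℕ) : ℝ) ^ s = ((p : ℝ) ^ s) ^ k := by
  rw [Nat.cast_pow, Real.rpow_pow_comm (Nat.cast_nonneg p)]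

lemma tsum_le_exp_of_le_geometric {u : ℕ → ℝ} (hu0 : ∀ a, 0 ≤ u a) (hu_zero : u 0 = 1)
    {A r : ℝ} (hr0 : 0 ≤ r) (hr1 : r < 1) (hu : ∀ a, u a ≤ A * r ^ a) :
    ∑' a, u a ≤ exp (u 1 + A * (r ^ 2 / (1 - r))) := by
  have hgeom := summable_geometric_of_lt_one hr0 hr1
  have hsum : Summable u := .of_nonneg_of_le hu0 hu (hgeom.mul_left A)
  have htail : ∑' a, u (a + 2) ≤ A * (r ^ 2 / (1 - r)) := calc
    ∑' a, u (a + 2) ≤ ∑' a, A * r ^ 2 * r ^ a :=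
      ((summable_nat_add_iff 2).mpr hsum).tsum_le_tsum
        (fun a => (hu _).trans_eq (by ring)) (hgeom.mul_left _)
    _ = A * (r ^ 2 / (1 - r)) := by
      rw [tsum_mul_left, tsum_geometric_of_lt_one hr0 hr1]; ring
  rw [← hsum.sum_add_tsum_nat_add 2, sum_range_succ, sum_range_one, hu_zero]
  linarith [add_one_le_exp (u 1 + A * (r ^ 2 / (1 - r)))]

noncomputable def primePowTail (σ : ℝ) : ℝ :=
  (1 - 2 ^ (-σ))⁻¹ * ∑' n : ℕ, (n : ℝ) ^ (-(2 * σ))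

lemma geom_tail_rpow_le {σ : ℝ} (hσ : 0 < σ) {p : ℕ} (hp : 2 ≤ p) :
    ((p : ℝ) ^ (-σ)) ^ 2 / (1 - (p : ℝ) ^ (-σ)) ≤ (1 - 2 ^ (-σ))⁻¹ * (p : ℝ) ^ (-(2 * σ)) := by
  have hp' : (2 : ℝ) ≤ p := by exact_mod_cast hp
  have h2 : (2 : ℝ) ^ (-σ) < 1 := rpow_lt_one_of_one_lt_of_neg one_lt_two (neg_neg_of_pos hσ)
  have hr : (p : ℝ) ^ (-σ) ≤ 2 ^ (-σ) := rpow_le_rpow_of_nonpos two_pos hp' (by linarith)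
  rw [← rpow_natCast, ← rpow_mul (by positivity), div_eq_inv_mul]
  gcongr
  · linarith
  · exact le_of_eq (by push_cast; ring_nf)

lemma sum_geom_tail_rpow_le {σ : ℝ} (hσ : 1 / 2 < σ) {s : Finset ℕ} (hs : ∀ p ∈ s, 2 ≤ p) :
    ∑ p ∈ s, ((p : ℝ) ^ (-σ)) ^ 2 / (1 - (p : ℝ) ^ (-σ)) ≤ primePowTail σ := by
  have h2 : (2 : ℝ) ^ (-σ) < 1 := rpow_lt_one_of_one_lt_of_neg one_lt_two (by linarith)
  calc ∑ p ∈ s, ((p : ℝ) ^ (-σ)) ^ 2 / (1 - (p : ℝ) ^ (-σ))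
      ≤ ∑ p ∈ s, (1 - 2 ^ (-σ))⁻¹ * (p : ℝ) ^ (-(2 * σ)) :=
        sum_le_sum fun p hp => geom_tail_rpow_le (by linarith) (hs p hp)
    _ ≤ primePowTail σ := by
      rw [← mul_sum, primePowTail]
      have : 0 ≤ (1 - (2 : ℝ) ^ (-σ))⁻¹ := inv_nonneg.mpr (by linarith)
      gcongr
      exact (summable_nat_rpow.mpr (by linarith)).sum_le_tsum _
        fun n _ => rpow_nonneg n.cast_nonneg _

lemma primePowTail_nonneg {σ : ℝ} (hσ : 1 / 2 < σ) : 0 ≤ primePowTail σ := by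
  simpa using sum_geom_tail_rpow_le hσ (s := ∅) (by simp)

lemma sum_Icc_le_prod_primesLE_tsum {g : ℕ → ℝ} (hg0 : ∀ n, 0 ≤ g n) (hg1 : g 1 = 1)
    (hmul : ∀ {m n : ℕ}, m.Coprime n → g (m * n) = g m * g n)
    (hsum : ∀ {p : ℕ}, p.Prime → Summable fun a => g (p ^ a)) (N : ℕ) :
    ∑ n ∈ Icc 1 N, g n ≤ ∏ p ∈ N.primesLE, ∑' a, g (p ^ a) := by
  obtain ⟨-, hprod⟩ := EulerProduct.summable_and_hasSum_smoothNumbers_prod_primesBelow_tsum hg1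
    hmul (fun hp => by simpa only [norm_of_nonneg (hg0 _)] using hsum hp) (N + 1)
  calc ∑ n ∈ Icc 1 N, g n = ∑ n ∈ Icc 1 N, (N + 1).smoothNumbers.indicator g n :=
        sum_congr rfl fun n hn => (Set.indicator_of_mem (Nat.mem_smoothNumbers_of_lt
          (by grind) (by grind)) g).symm
    _ ≤ _ := sum_le_hasSum _ (fun n _ => Set.indicator_nonneg (fun n _ => hg0 n) n)
        (hasSum_subtype_iff_indicator.mp hprod)

lemma div_natCast_pow_le_geometric {f : ℕ → ℝ} {B ε : ℝ}
    (hB : ∀ n, 0 < n → f n ≤ B * (n : ℝ) ^ ε) {p : ℕ} (hp : p.Prime) (a : ℕ) :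
    f (p ^ a) / (p ^ a : ℕ) ≤ B * ((p : ℝ) ^ (-(1 - ε))) ^ a := by
  have hpa : (0 : ℝ) < (p ^ a : ℕ) := by exact_mod_cast pow_pos hp.pos a
  rw [div_le_iff₀ hpa, neg_sub, ← natCast_pow_rpow, mul_assoc, ← rpow_add_one hpa.ne',
    sub_add_cancel]
  exact hB _ (by exact_mod_cast hpa)

lemma div_natCast_mul_of_coprime {f : ℕ → ℝ}
    (hmul : ∀ m n, 0 < m → 0 < n → m.Coprime n → f (m * n) = f m * f n) {m n : ℕ}
    (hmn : m.Coprime n) : f (m * n) / (m * n : ℕ) = f m / m * (f n / n) := by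
  rcases m.eq_zero_or_pos with rfl | hm
  · simp [(Nat.coprime_zero_left n).mp hmn]
  rcases n.eq_zero_or_pos with rfl | hn
  · simp
  rw [hmul m n hm hn hmn, Nat.cast_mul]
  ring

lemma sum_Icc_div_le_exp {f : ℕ → ℝ} (hf0 : ∀ n, 0 < n → 0 ≤ f n) (hf1 : f 1 = 1)
    (hmul : ∀ m n, 0 < m → 0 < n → m.Coprime n → f (m * n) = f m * f n) {B ε : ℝ}
    (hε : ε < 1 / 2) (hB : ∀ n, 0 < n → f n ≤ B * (n : ℝ) ^ ε) (N : ℕ) :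
    ∑ n ∈ Icc 1 N, f n / n ≤
      exp (B * primePowTail (1 - ε)) * exp (∑ p ∈ N.primesLE, f p / p) := by
  set g : ℕ → ℝ := fun n => f n / n
  set r : ℕ → ℝ := fun p => (p : ℝ) ^ (-(1 - ε))
  have hg0 : ∀ n, 0 ≤ g n := fun n => by
    rcases n.eq_zero_or_pos with rfl | hn
    · simp [g]
    · exact div_nonneg (hf0 n hn) n.cast_nonneg
  have hg1 : g 1 = 1 := by simpa [g] using hf1
  have hr0 : ∀ p : ℕ, 0 ≤ r p := fun p => rpow_nonneg p.cast_nonneg _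
  have hr1 : ∀ p : ℕ, p.Prime → r p < 1 := fun p hp =>
    rpow_lt_one_of_one_lt_of_neg (by exact_mod_cast hp.one_lt) (by linarith)
  have hfactor : ∀ p ∈ N.primesLE,
      ∑' a, g (p ^ a) ≤ exp (f p / p + B * (r p ^ 2 / (1 - r p))) := by
    intro p hp
    have hp' := Nat.prime_of_mem_primesLE hp
    simpa [g] using tsum_le_exp_of_le_geometric (u := fun a => g (p ^ a)) (fun a => hg0 _) hg1
      (hr0 p) (hr1 p hp') (div_natCast_pow_le_geometric hB hp')
  have hB0 : 0 ≤ B := zero_le_one.trans (by simpa [hf1] using hB 1 one_pos)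
  calc ∑ n ∈ Icc 1 N, f n / n ≤ ∏ p ∈ N.primesLE, ∑' a, g (p ^ a) :=
        sum_Icc_le_prod_primesLE_tsum hg0 hg1 (div_natCast_mul_of_coprime hmul) (fun hp =>
          .of_nonneg_of_le (fun a => hg0 _) (div_natCast_pow_le_geometric hB hp)
            ((summable_geometric_of_lt_one (hr0 _) (hr1 _ hp)).mul_left B)) N
    _ ≤ ∏ p ∈ N.primesLE, exp (f p / p + B * (r p ^ 2 / (1 - r p))) :=
        prod_le_prod (fun p _ => tsum_nonneg fun a => hg0 _) hfactor
    _ ≤ exp (B * primePowTail (1 - ε)) * exp (∑ p ∈ N.primesLE, f p / p) := by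
      rw [← exp_sum, ← exp_add, sum_add_distrib, ← mul_sum, add_comm]
      gcongr
      exact sum_geom_tail_rpow_le (by linarith) fun p hp => (Nat.prime_of_mem_primesLE hp).two_le

def primePowPairs (y : ℕ) : Finset (ℕ × ℕ) :=
  (y.primesLE ×ˢ Icc 1 y).filter fun q => q.1 ^ q.2 ≤ y

lemma mem_primePowPairs {y : ℕ} {q : ℕ × ℕ} :
    q ∈ primePowPairs y ↔ q.1.Prime ∧ 1 ≤ q.2 ∧ q.1 ^ q.2 ≤ y := by
  simp only [primePowPairs, mem_filter, mem_product, Nat.mem_primesLE, mem_Icc]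
  constructor
  · rintro ⟨⟨⟨-, hp⟩, hk, -⟩, hy⟩
    exact ⟨hp, hk, hy⟩
  · rintro ⟨hp, hk, hy⟩
    exact ⟨⟨⟨(Nat.le_self_pow (by omega) _).trans hy, hp⟩, hk,
      (Nat.lt_pow_self hp.one_lt).le.trans hy⟩, hy⟩

lemma mul_log_eq_sum_primeFactors {f : ℕ → ℝ}
    (hmul : ∀ m n, 0 < m → 0 < n → m.Coprime n → f (m * n) = f m * f n) {n : ℕ} (hn : n ≠ 0) :
    f n * log n = ∑ p ∈ n.primeFactors,
      f (ordCompl[p] n) * (f (p ^ n.factorization p) * log (p ^ n.factorization p : ℕ)) := by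
  rw [log_nat_eq_sum_factorization, Finsupp.sum, Nat.support_factorization, mul_sum]
  refine sum_congr rfl fun p hp => ?_
  have hp' := Nat.prime_of_mem_primeFactors hp
  have hsplit : f n = f (p ^ n.factorization p) * f (ordCompl[p] n) := by
    conv_lhs => rw [← Nat.ordProj_mul_ordCompl_eq_self n p]
    exact hmul _ _ (pow_pos hp'.pos _) (Nat.ordCompl_pos p hn)
      ((Nat.coprime_ordCompl hp' hn).pow_left _)
  rw [hsplit, Nat.cast_pow, Real.log_pow]
  ring

lemma sum_mul_log_le_sum_mul_sum_primePowPairs {f : ℕ → ℝ} (hf0 : ∀ n, 0 < n → 0 ≤ f n)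
    (hmul : ∀ m n, 0 < m → 0 < n → m.Coprime n → f (m * n) = f m * f n) (N : ℕ) :
    ∑ n ∈ Icc 1 N, f n * log n ≤
      ∑ m ∈ Icc 1 N, f m * ∑ q ∈ primePowPairs (N / m), f (q.1 ^ q.2) * log (q.1 ^ q.2 : ℕ) := by
  rw [sum_congr rfl fun n hn => mul_log_eq_sum_primeFactors hmul (n := n) (by grind)]
  simp_rw [mul_sum]
  rw [sum_sigma', sum_sigma']
  refine sum_le_sum_of_injOn (fun σ => ⟨ordCompl[σ.2] σ.1, (σ.2, σ.1.factorization σ.2)⟩)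
    ?_ ?_ ?_ (fun _ _ => le_rfl)
  · rintro ⟨n, p⟩ - ⟨n', p'⟩ - h
    simp only [Sigma.mk.injEq, heq_iff_eq, Prod.mk.injEq] at h
    obtain ⟨hm, rfl, hk⟩ := h
    have : n = n' := by
      rw [← Nat.ordProj_mul_ordCompl_eq_self n p, ← Nat.ordProj_mul_ordCompl_eq_self n' p, hm, hk]
    subst this
    rfl
  · rintro ⟨n, p⟩ h
    simp only [Finset.mem_coe, mem_sigma, mem_Icc, Nat.mem_primeFactors] at h ⊢
    obtain ⟨⟨-, hnN⟩, hp, hpn, hn0⟩ := h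
    refine ⟨⟨Nat.ordCompl_pos p hn0, (Nat.div_le_self _ _).trans hnN⟩, mem_primePowPairs.mpr
      ⟨hp, hp.factorization_pos_of_dvd hn0 hpn, ?_⟩⟩
    rw [Nat.le_div_iff_mul_le (Nat.ordCompl_pos p hn0), Nat.ordProj_mul_ordCompl_eq_self]
    exact hnN
  · rintro ⟨m, p, k⟩ h
    simp only [mem_sigma, mem_Icc, mem_primePowPairs] at h
    obtain ⟨⟨hm, -⟩, hp, -, -⟩ := h
    have hpk : 0 < p ^ k := pow_pos hp.pos k
    exact mul_nonneg (hf0 m hm)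
      (mul_nonneg (hf0 _ hpk) (log_nonneg (by exact_mod_cast hpk)))

lemma mul_log_le_of_le_rpow {c B t y ε : ℝ} (hε : 0 < ε) (ht : 1 ≤ t) (hty : t ≤ y)
    (hc0 : 0 ≤ c) (hc : c ≤ B * t ^ ε) : c * log t ≤ B / ε * y * t ^ (-(1 - 2 * ε)) := by
  have ht0 : 0 < t := by linarith
  have hB : 0 ≤ B := nonneg_of_mul_nonneg_left (hc0.trans hc) (rpow_pos_of_pos ht0 _)
  calc c * log t ≤ B * t ^ ε * (t ^ ε / ε) :=
        mul_le_mul hc (log_le_rpow_div ht0.le hε) (log_nonneg ht) (hc0.trans hc)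
    _ = B / ε * (t * t ^ (-(1 - 2 * ε))) := by
      rw [mul_comm t, ← rpow_add_one ht0.ne', show -(1 - 2 * ε) + 1 = ε + ε by ring,
        rpow_add ht0]
      ring
    _ ≤ B / ε * y * t ^ (-(1 - 2 * ε)) := by
      rw [mul_assoc]
      gcongr

lemma sum_primePowPairs_filter_eq_one_le {f : ℕ → ℝ} {A : ℝ} (hA : 0 ≤ A)
    (hfp : ∀ p, p.Prime → f p ≤ A) (y : ℕ) :
    ∑ q ∈ primePowPairs y with q.2 = 1, f (q.1 ^ q.2) * log (q.1 ^ q.2 : ℕ) ≤ A * log 4 * y := by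
  calc ∑ q ∈ primePowPairs y with q.2 = 1, f (q.1 ^ q.2) * log (q.1 ^ q.2 : ℕ)
      ≤ ∑ p ∈ y.primesLE, A * log p := by
        refine sum_le_sum_of_injOn Prod.fst ?_ ?_ ?_ ?_
        · intro q hq q' hq' h
          simp only [mem_coe, mem_filter] at hq hq'
          exact Prod.ext h (hq.2.trans hq'.2.symm)
        · intro q hq
          simp only [mem_coe, mem_filter, mem_primePowPairs] at hq
          obtain ⟨⟨hp, -, hy⟩, h1⟩ := hq
          rw [h1, pow_one] at hy
          exact Nat.mem_primesLE.mpr ⟨hy, hp⟩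
        · intro p hp
          exact mul_nonneg hA
            (log_nonneg (by exact_mod_cast (Nat.prime_of_mem_primesLE hp).one_le))
        · rintro ⟨p, k⟩ hq
          simp only [mem_filter, mem_primePowPairs] at hq
          obtain ⟨⟨hp, -, -⟩, rfl⟩ := hq
          simp only [pow_one]
          exact mul_le_mul_of_nonneg_right (hfp p hp) (log_nonneg (by exact_mod_cast hp.one_le))
    _ = A * Chebyshev.theta y := by rw [Chebyshev.theta_eq_sum_primesLE_log, mul_sum]
    _ ≤ A * log 4 * y := by
      rw [mul_assoc]
      exact mul_le_mul_of_nonneg_left (Chebyshev.theta_le_log4_mul_x y.cast_nonneg) hA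

lemma sum_primePowPairs_filter_ne_one_le {f : ℕ → ℝ} (hf0 : ∀ n, 0 < n → 0 ≤ f n) {B ε : ℝ}
    (hε : 0 < ε) (hε' : ε < 1 / 4) (hB : ∀ n, 0 < n → f n ≤ B * (n : ℝ) ^ ε) (y : ℕ) :
    ∑ q ∈ primePowPairs y with ¬q.2 = 1, f (q.1 ^ q.2) * log (q.1 ^ q.2 : ℕ) ≤
      B / ε * primePowTail (1 - 2 * ε) * y := by
  have hB0 : 0 ≤ B := (hf0 1 one_pos).trans (by simpa using hB 1 one_pos)
  set r : ℕ → ℝ := fun p => (p : ℝ) ^ (-(1 - 2 * ε))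
  calc ∑ q ∈ primePowPairs y with ¬q.2 = 1, f (q.1 ^ q.2) * log (q.1 ^ q.2 : ℕ)
      ≤ ∑ q ∈ y.primesLE ×ˢ Ico 2 (y + 1), B / ε * y * r q.1 ^ q.2 := by
        refine sum_le_sum_of_injOn id (Set.injOn_id _) ?_ ?_ ?_
        · rintro ⟨p, k⟩ hq
          simp only [mem_coe, mem_filter, mem_primePowPairs] at hq
          obtain ⟨⟨hp, hk, hy⟩, hk1⟩ := hq
          simp only [id, mem_coe, mem_product, Nat.mem_primesLE, mem_Ico]
          exact ⟨⟨(Nat.le_self_pow (by omega) _).trans hy, hp⟩, by omega,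
            (Nat.lt_pow_self hp.one_lt).trans_le hy |>.trans (Nat.lt_succ_self y)⟩
        · intro q _
          positivity
        · rintro ⟨p, k⟩ hq
          simp only [mem_filter, mem_primePowPairs] at hq
          obtain ⟨⟨hp, -, hy⟩, -⟩ := hq
          have hpk : 0 < p ^ k := pow_pos hp.pos k
          simpa only [r, id, natCast_pow_rpow] using mul_log_le_of_le_rpow hε
            (by exact_mod_cast hpk) (by exact_mod_cast hy) (hf0 _ hpk) (hB _ hpk)
    _ = B / ε * y * ∑ p ∈ y.primesLE, ∑ k ∈ Ico 2 (y + 1), r p ^ k := by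
      rw [← mul_sum, sum_product]
    _ ≤ B / ε * y * ∑ p ∈ y.primesLE, r p ^ 2 / (1 - r p) := by
      gcongr with p hp
      exact geom_sum_Ico_le_of_lt_one (rpow_nonneg p.cast_nonneg _)
        (rpow_lt_one_of_one_lt_of_neg (by exact_mod_cast (Nat.prime_of_mem_primesLE hp).one_lt)
          (by linarith))
    _ ≤ B / ε * y * primePowTail (1 - 2 * ε) := by
      gcongr
      exact sum_geom_tail_rpow_le (by linarith) fun p hp => (Nat.prime_of_mem_primesLE hp).two_le
    _ = B / ε * primePowTail (1 - 2 * ε) * y := by ring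

lemma sum_primePowPairs_mul_log_le {f : ℕ → ℝ} (hf0 : ∀ n, 0 < n → 0 ≤ f n) {A B ε : ℝ}
    (hA : 0 ≤ A) (hfp : ∀ p, p.Prime → f p ≤ A) (hε : 0 < ε) (hε' : ε < 1 / 4)
    (hB : ∀ n, 0 < n → f n ≤ B * (n : ℝ) ^ ε) (y : ℕ) :
    ∑ q ∈ primePowPairs y, f (q.1 ^ q.2) * log (q.1 ^ q.2 : ℕ) ≤
      (A * log 4 + B / ε * primePowTail (1 - 2 * ε)) * y := by
  rw [← sum_filter_add_sum_filter_not _ (fun q => q.2 = 1), add_mul]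
  exact add_le_add (sum_primePowPairs_filter_eq_one_le hA hfp y)
    (sum_primePowPairs_filter_ne_one_le hf0 hε hε' hB y)

lemma sum_mul_log_le_mul_sum_div {f : ℕ → ℝ} (hf0 : ∀ n, 0 < n → 0 ≤ f n)
    (hmul : ∀ m n, 0 < m → 0 < n → m.Coprime n → f (m * n) = f m * f n) {c : ℝ} (hc : 0 ≤ c)
    (hV : ∀ y, ∑ q ∈ primePowPairs y, f (q.1 ^ q.2) * log (q.1 ^ q.2 : ℕ) ≤ c * y) (N : ℕ) :
    ∑ n ∈ Icc 1 N, f n * log n ≤ c * N * ∑ n ∈ Icc 1 N, f n / n := by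
  refine (sum_mul_log_le_sum_mul_sum_primePowPairs hf0 hmul N).trans ?_
  rw [mul_sum]
  refine sum_le_sum fun m hm => ?_
  have hm0 : 0 < m := by grind
  calc f m * ∑ q ∈ primePowPairs (N / m), f (q.1 ^ q.2) * log (q.1 ^ q.2 : ℕ)
      ≤ f m * (c * (N / m : ℕ)) := mul_le_mul_of_nonneg_left (hV _) (hf0 m hm0)
    _ ≤ f m * (c * (N / m)) := by
      gcongr
      · exact hf0 m hm0
      · exact Nat.cast_div_le
    _ = c * N * (f m / m) := by ring

lemma sum_Icc_floor_mul_log_le {f : ℕ → ℝ} (hf0 : ∀ n, 0 < n → 0 ≤ f n)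
    (hmul : ∀ m n, 0 < m → 0 < n → m.Coprime n → f (m * n) = f m * f n) {c : ℝ} (hc : 0 ≤ c)
    (hV : ∀ y, ∑ q ∈ primePowPairs y, f (q.1 ^ q.2) * log (q.1 ^ q.2 : ℕ) ≤ c * y)
    {x : ℝ} (hx : 0 < x) :
    (∑ n ∈ Icc 1 ⌊x⌋₊, f n) * log x ≤ (c + 1) * x * ∑ n ∈ Icc 1 ⌊x⌋₊, f n / n := by
  have hsplit : ∀ n ∈ Icc 1 ⌊x⌋₊, f n * log x = f n * log n + f n * log (x / n) :=
    fun n hn => by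
      rw [log_div hx.ne' (by norm_cast; grind)]
      ring
  have hrest : ∑ n ∈ Icc 1 ⌊x⌋₊, f n * log (x / n) ≤ x * ∑ n ∈ Icc 1 ⌊x⌋₊, f n / n := by
    rw [mul_sum]
    refine sum_le_sum fun n hn => ?_
    have hn0 : 0 < n := by grind
    calc f n * log (x / n) ≤ f n * (x / n) :=
          mul_le_mul_of_nonneg_left (log_le_self (by positivity)) (hf0 n hn0)
      _ = x * (f n / n) := by ring
  have hN : c * ⌊x⌋₊ ≤ c * x := mul_le_mul_of_nonneg_left (Nat.floor_le hx.le) hc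
  have hS : 0 ≤ ∑ n ∈ Icc 1 ⌊x⌋₊, f n / n :=
    sum_nonneg fun n hn => div_nonneg (hf0 n (by grind)) n.cast_nonneg
  rw [sum_mul, sum_congr rfl hsplit, sum_add_distrib]
  nlinarith [sum_mul_log_le_mul_sum_div hf0 hmul hc hV ⌊x⌋₊]

/-- Brun–Titchmarsh-type theorem for multiplicative functions, part (a).
Let `f` be a non-negative multiplicative arithmetic function with `f(p^r) ≤ A₁^r` for all
primes `p` and `r ≥ 1`, and `f(n) ≤ A₂(ε) n^ε` for every `ε > 0` and all `n ≥ 1`.  Then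
`∑_{n ≤ x} f(n) ≪ (x / log x) exp(∑_{p ≤ x} f(p)/p)` for `x ≥ 2`, with implied constant
depending only on `A₁` and the function `A₂`. -/
theorem shiu_sum_bound (A₁ : ℝ) (hA₁ : 0 < A₁) (A₂ : ℝ → ℝ)
    (hA₂ : ∀ ε : ℝ, 0 < ε → 0 < A₂ ε) :
    ∃ C : ℝ, 0 < C ∧ ∀ f : ℕ → ℝ,
      (∀ n : ℕ, 0 < n → 0 ≤ f n) →
      f 1 = 1 →
      (∀ m n : ℕ, 0 < m → 0 < n → m.Coprime n → f (m * n) = f m * f n) →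
      (∀ p r : ℕ, p.Prime → 1 ≤ r → f (p ^ r) ≤ A₁ ^ r) →
      (∀ ε : ℝ, 0 < ε → ∀ n : ℕ, 0 < n → f n ≤ A₂ ε * (n : ℝ) ^ ε) →
      ∀ x : ℝ, 2 ≤ x →
        ∑ n ∈ Finset.Icc 1 ⌊x⌋₊, f n ≤
          C * (x / Real.log x) *
            Real.exp (∑ p ∈ (Finset.Icc 1 ⌊x⌋₊).filter Nat.Prime, f p / p) := by
  set B := A₂ (1 / 8)
  have hB : 0 < B := hA₂ _ (by norm_num)
  set c := A₁ * log 4 + B / (1 / 8) * primePowTail (1 - 2 * (1 / 8))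
  have hc : 0 ≤ c := by
    have := primePowTail_nonneg (σ := 1 - 2 * (1 / 8)) (by norm_num)
    positivity
  refine ⟨(c + 1) * exp (B * primePowTail (1 - 1 / 8)), by positivity,
    fun f hf0 hf1 hmul hfA₁ hfA₂ x hx => ?_⟩
  have hV := sum_primePowPairs_mul_log_le hf0 hA₁.le (fun p hp => by simpa using hfA₁ p 1 hp le_rfl)
    (by norm_num) (by norm_num) (hfA₂ (1 / 8) (by norm_num))
  have hS := sum_Icc_div_le_exp hf0 hf1 hmul (by norm_num) (hfA₂ (1 / 8) (by norm_num)) ⌊x⌋₊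
  rw [← Nat.primesLE_eq_filter_Icc_one, mul_div_assoc', div_mul_eq_mul_div,
    le_div_iff₀ (log_pos (by linarith))]
  calc (∑ n ∈ Icc 1 ⌊x⌋₊, f n) * log x ≤ (c + 1) * x * ∑ n ∈ Icc 1 ⌊x⌋₊, f n / n :=
        sum_Icc_floor_mul_log_le hf0 hmul hc hV (by linarith)
    _ ≤ (c + 1) * x * (exp (B * primePowTail (1 - 1 / 8)) *
          exp (∑ p ∈ ⌊x⌋₊.primesLE, f p / p)) :=
        mul_le_mul_of_nonneg_left hS (by positivity)
    _ = _ := by ring
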